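/- Assume κ is UD-self-dual and 𝗊 : P → ℝ_{>0} is such that 𝗊² satisfies the Kerov condition with a parameter t > 0; fix ξ ∈ (0,1). Then for every μ ∈ 𝔾 the family (P*_μ(λ) M_ξ(λ))_{λ∈𝔾} is summable and Σ_{λ∈𝔾} P*_μ(λ) M_ξ(λ) = (ξ/(1−ξ))^{|μ|} · (∏_{□∈μ} 𝗊(□)²) · dim μ / |μ|!. -/

import Mathlib

open scoped BigOperators Classical

namespace IdealGraph

variable {P : Type*} [PartialOrder P]

/-- A finite order ideal of the poset `P`, encoded as a down-closed `Finset`. -/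
def IsIdealF (s : Finset P) : Prop := ∀ ⦃x⦄, x ∈ s → ∀ ⦃y⦄, y ≤ x → y ∈ s

/-- The vertex set of the branching graph of ideals `𝔾 = J(P)`. -/
abbrev G (P : Type*) [PartialOrder P] := {s : Finset P // IsIdealF s}

/-- The `n`-th level `𝔾_n` of the branching graph. -/
abbrev Lvl (P : Type*) [PartialOrder P] (n : ℕ) := {s : Finset P // IsIdealF s ∧ s.card = n}

/-- `CoversF μ l` : `μ ↗ l` is an edge of the branching graph of ideals. -/
def CoversF (μ l : Finset P) : Prop :=
  IsIdealF μ ∧ IsIdealF l ∧ μ ⊆ l ∧ l.card = μ.card + 1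

/-- All levels `𝔾_n` of the graph are finite. -/
def LevelsFinite (P : Type*) [PartialOrder P] : Prop :=
  ∀ n : ℕ, {s : Finset P | IsIdealF s ∧ s.card = n}.Finite

/-- An edge multiplicity function is (strictly) positive on all edges. -/
def EdgePositive (κ : Finset P → Finset P → ℝ) : Prop :=
  ∀ μ l, CoversF μ l → 0 < κ μ l

/-- UD-self-duality of a multiplicity function: for every quadrangle `μ ρ ν λ`. -/
def UDSelfDual (κ : Finset P → Finset P → ℝ) : Prop :=
  ∀ μ ρ l ν : Finset P, CoversF μ ρ → CoversF ρ ν → CoversF μ l → CoversF l ν →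
    ρ ≠ l → κ μ l * κ μ ρ = κ l ν * κ ρ ν

/-- The value of a function `q : P → R` on the box `l ∖ μ` of an edge `μ ↗ l`. -/
noncomputable def bx {R : Type*} [AddCommMonoid R] (q : P → R) (μ l : Finset P) : R :=
  ∑ x ∈ l \ μ, q x

/-- The Kerov condition with parameter `t` for the function `q2 = 𝗊²`. -/
def KerovCond (κ : Finset P → Finset P → ℝ) (q2 : P → ℂ) (t : ℂ) : Prop :=
  ∀ l : Finset P, IsIdealF l →
    (∑' ν : {ν : Finset P // CoversF l ν}, (κ l ν.1 : ℂ) ^ 2 * bx q2 l ν.1) -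
      (∑' μ : {μ : Finset P // CoversF μ l}, (κ μ.1 l : ℂ) ^ 2 * bx q2 μ.1 l)
      = 2 * (l.card : ℂ) + t

/-- Weighted number of saturated chains of length `n` from the ideal `μ` up to the ideal `l`. -/
noncomputable def dimRel (κ : Finset P → Finset P → ℝ) : ℕ → Finset P → Finset P → ℝ
  | 0, μ, l => if μ = l then 1 else 0
  | n + 1, μ, l =>
      ∑ x ∈ l, if CoversF (l.erase x) l ∧ μ ⊆ l.erase x
        then κ (l.erase x) l * dimRel κ n μ (l.erase x) else 0

/-- Relative dimension `dim(μ, l)`. -/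
noncomputable def dimI (κ : Finset P → Finset P → ℝ) (μ l : Finset P) : ℝ :=
  dimRel κ (l.card - μ.card) μ l

/-- Dimension `dim l = dim(∅, l)`. -/
noncomputable def dimT (κ : Finset P → Finset P → ℝ) (l : Finset P) : ℝ :=
  dimI κ ∅ l

/-- The relative dimension function `P*_μ`. -/
noncomputable def Pstar (κ : Finset P → Finset P → ℝ) (μ l : Finset P) : ℝ :=
  (l.card.descFactorial μ.card : ℝ) * dimI κ μ l / dimT κ l

/-- The mixed measure `M_ξ`. -/
noncomputable def Mxi (κ : Finset P → Finset P → ℝ) (q : P → ℝ) (t ξ : ℝ) (l : Finset P) : ℝ :=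
  (1 - ξ) ^ t * ξ ^ l.card * (dimT κ l / (Nat.factorial l.card : ℝ)) ^ 2 * ∏ x ∈ l, q x ^ 2

/-- The coherent measure `M_n(l)` (for `n = |l|`). -/
noncomputable def Mcoh (κ : Finset P → Finset P → ℝ) (q : P → ℝ) (t : ℝ) (l : Finset P) : ℝ :=
  dimT κ l ^ 2 * (∏ x ∈ l, q x ^ 2) /
    ((Nat.factorial l.card : ℝ) * Polynomial.eval t (ascPochhammer ℝ l.card))

/-- The jump rates `Q(l, ρ)` of the Markov jump dynamics. -/
noncomputable def Qrate (κ : Finset P → Finset P → ℝ) (q : P → ℝ) (t ξ : ℝ)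
    (l ρ : Finset P) : ℝ :=
  if CoversF ρ l then (1 - ξ)⁻¹ * l.card * (κ ρ l * dimT κ ρ / dimT κ l)
  else if CoversF l ρ then
    (1 - ξ)⁻¹ * (ξ * ((l.card : ℝ) + t)) *
      ((Mcoh κ q t ρ / Mcoh κ q t l) * (κ l ρ * dimT κ l / dimT κ ρ))
  else if ρ = l then -((1 - ξ)⁻¹ * ((l.card : ℝ) + ξ * ((l.card : ℝ) + t)))
  else 0

/-- The function `𝔐_l`. -/
noncomputable def Mfrak (κ : Finset P → Finset P → ℝ) (q : P → ℝ) (ξ : ℝ)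
    (l ν : Finset P) : ℝ :=
  ∑ μ ∈ l.powerset.filter (fun s => IsIdealF s),
    (ξ / (ξ - 1)) ^ (l.card - μ.card) *
      (dimI κ μ l / (Nat.factorial (l.card - μ.card) : ℝ)) *
      (∏ x ∈ l \ μ, q x ^ 2) * Pstar κ μ ν

/-- The operator `U` built from `κ` and `q`. -/
noncomputable def Uop (κ : Finset P → Finset P → ℝ) (q : P → ℂ) (f : Finset P → ℂ) :
    Finset P → ℂ :=
  fun l => ∑' μ : {μ : Finset P // CoversF μ l}, (κ μ.1 l : ℂ) * bx q μ.1 l * f μ.1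

/-- The operator `D` built from `κ` and `q`. -/
noncomputable def Dop (κ : Finset P → Finset P → ℝ) (q : P → ℂ) (f : Finset P → ℂ) :
    Finset P → ℂ :=
  fun l => ∑' ν : {ν : Finset P // CoversF l ν}, (κ l ν.1 : ℂ) * bx q l ν.1 * f ν.1

/-- The standard basis vector `δ_l`. -/
noncomputable def delta (l : Finset P) : Finset P → ℂ := fun ρ => if ρ = l then 1 else 0

/-!
Expanding `dim ν` over the lower covers of `ν` and trading each path `λ ↗ ν ↘ ρ`
(`ρ ≠ λ`) for the path `λ ↘ λ ∩ ρ ↗ ρ` of the same quadrangle, UD-self-duality and the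
Kerov condition give `Σ_{ν ↘ λ} κ(λ,ν) 𝗊²(ν∖λ) dim ν = (|λ|+1)(|λ|+t) dim λ` by induction
on `λ`. Summing this over a level,
`Σ_{|λ|=|μ|+m} dim(μ,λ) dim λ ∏_{□∈λ} 𝗊(□)² = dim μ ∏_{□∈μ} 𝗊(□)² (|μ|+1)^{↑m} (|μ|+t)^{↑m}`,
so up to a common factor the level sums of `P*_μ M_ξ` are the terms of the binomial series
`Σ_m (|μ|+t)^{↑m} ξ^m / m! = (1-ξ)^{-(|μ|+t)}`.
-/

open Finset
open scoped Nat

section Covers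

lemma IsIdealF.inter {s u : Finset P} (hs : IsIdealF s) (hu : IsIdealF u) :
    IsIdealF (s ∩ u) := fun _ hx _ hy =>
  mem_inter.2 ⟨hs (mem_inter.1 hx).1 hy, hu (mem_inter.1 hx).2 hy⟩

lemma IsIdealF.union {s u : Finset P} (hs : IsIdealF s) (hu : IsIdealF u) :
    IsIdealF (s ∪ u) := fun _ hx _ hy =>
  (mem_union.1 hx).elim (fun h => mem_union_left _ (hs h hy)) (fun h => mem_union_right _ (hu h hy))

variable {ρ l ν σ : Finset P}

lemma CoversF.ssubset (h : CoversF ρ l) : ρ ⊂ l :=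
  ssubset_of_subset_of_ne h.2.2.1 (by rintro rfl; have := h.2.2.2; omega)

lemma CoversF.exists_eq_erase (h : CoversF ρ l) : ∃ x ∈ l, ρ = l.erase x := by
  obtain ⟨x, hxl, hxρ⟩ := exists_of_ssubset h.ssubset
  refine ⟨x, hxl, eq_of_subset_of_card_le (subset_erase.2 ⟨h.2.2.1, hxρ⟩) ?_⟩
  rw [card_erase_of_mem hxl, h.2.2.2]
  omega

lemma CoversF.prod_eq_bx_mul {R : Type*} [CommRing R] (h : CoversF l ν) (f : P → R) :
    ∏ x ∈ ν, f x = bx f l ν * ∏ x ∈ l, f x := by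
  obtain ⟨a, ha⟩ := card_eq_one.1 (by rw [card_sdiff_of_subset h.2.2.1, h.2.2.2]; omega :
    (ν \ l).card = 1)
  rw [bx, ← prod_sdiff h.2.2.1, ha, prod_singleton, sum_singleton]

lemma exists_coversF_of_nonempty (hl : IsIdealF l) (hne : l.Nonempty) : ∃ ρ, CoversF ρ l := by
  obtain ⟨x, hx⟩ := l.exists_maximal hne
  refine ⟨l.erase x, fun y hy z hzy => mem_erase.2 ⟨?_, hl (mem_of_mem_erase hy) hzy⟩, hl,
    erase_subset x l, by rw [card_erase_of_mem hx.1]; have := hne.card_pos; omega⟩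
  rintro rfl
  exact ne_of_mem_erase hy ((hx.2 (mem_of_mem_erase hy) hzy).antisymm hzy)

lemma coversF_inter_of_coversF (hl : CoversF l ν) (hρ : CoversF ρ ν) (hne : l ≠ ρ) :
    CoversF (l ∩ ρ) l ∧ CoversF (l ∩ ρ) ρ ∧ l ∪ ρ = ν := by
  obtain ⟨hlI, -, hlν, hlc⟩ := hl
  obtain ⟨hρI, -, hρν, hρc⟩ := hρ
  have hρl : ¬ ρ ⊆ l := fun h => hne (eq_of_subset_of_card_le h (by omega)).symm
  have hlt : l.card < (l ∪ ρ).card :=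
    card_lt_card <| ssubset_of_subset_of_ne subset_union_left fun h =>
      hρl (union_eq_left.1 h.symm)
  have hunion : l ∪ ρ = ν := eq_of_subset_of_card_le (union_subset hlν hρν) (by omega)
  have hcard := card_union_add_card_inter l ρ
  rw [hunion] at hcard
  exact ⟨⟨hlI.inter hρI, hlI, inter_subset_left, by omega⟩,
    ⟨hlI.inter hρI, hρI, inter_subset_right, by omega⟩, hunion⟩

lemma coversF_union_of_coversF (hl : CoversF σ l) (hρ : CoversF σ ρ) (hne : l ≠ ρ) :
    CoversF l (l ∪ ρ) ∧ CoversF ρ (l ∪ ρ) ∧ l ∩ ρ = σ := by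
  obtain ⟨-, hlI, hσl, hlc⟩ := hl
  obtain ⟨-, hρI, hσρ, hρc⟩ := hρ
  have hlρ : ¬ l ⊆ ρ := fun h => hne (eq_of_subset_of_card_le h (by omega))
  have hlt : (l ∩ ρ).card < l.card :=
    card_lt_card (ssubset_of_subset_of_ne inter_subset_left (fun h => hlρ (inter_eq_left.1 h)))
  have hinter : l ∩ ρ = σ := (eq_of_subset_of_card_le (subset_inter hσl hσρ) (by omega)).symm
  have hcard := card_union_add_card_inter l ρ
  rw [hinter] at hcard
  exact ⟨⟨hlI, hlI.union hρI, subset_union_left, by omega⟩,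
    ⟨hρI, hlI.union hρI, subset_union_right, by omega⟩, hinter⟩

end Covers

section Neighbours

variable {hLF : LevelsFinite P} {n : ℕ} {s l ν : Finset P}

noncomputable def level (hLF : LevelsFinite P) (n : ℕ) : Finset (Finset P) := (hLF n).toFinset

lemma mem_level : s ∈ level hLF n ↔ IsIdealF s ∧ s.card = n := Set.Finite.mem_toFinset _

noncomputable def upCovers (hLF : LevelsFinite P) (l : Finset P) : Finset (Finset P) :=
  (level hLF (l.card + 1)).filter (CoversF l)

noncomputable def downCovers (l : Finset P) : Finset (Finset P) :=
  l.powerset.filter (CoversF · l)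

lemma mem_upCovers : ν ∈ upCovers hLF l ↔ CoversF l ν := by
  simp only [upCovers, mem_filter, mem_level, and_iff_right_iff_imp]
  exact fun h => ⟨h.2.1, h.2.2.2⟩

lemma mem_downCovers : s ∈ downCovers l ↔ CoversF s l := by
  simp only [downCovers, mem_filter, mem_powerset, and_iff_right_iff_imp]
  exact fun h => h.2.2.1

lemma sum_downCovers {M : Type*} [AddCommMonoid M] (l : Finset P) (f : Finset P → M) :
    ∑ ρ ∈ downCovers l, f ρ
      = ∑ x ∈ l, if CoversF (l.erase x) l then f (l.erase x) else 0 := by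
  rw [← sum_filter, ← sum_image (l.erase_injOn.mono (filter_subset _ _))]
  congr 1
  ext ρ
  simp only [mem_downCovers, mem_image, mem_filter]
  constructor
  · intro h
    obtain ⟨x, hx, rfl⟩ := h.exists_eq_erase
    exact ⟨x, ⟨hx, h⟩, rfl⟩
  · rintro ⟨x, ⟨-, h⟩, rfl⟩
    exact h

lemma tsum_subtype_eq_sum {α M : Type*} [AddCommMonoid M] [TopologicalSpace M] {p : α → Prop}
    {s : Finset α} (h : ∀ a, p a ↔ a ∈ s) (f : α → M) :
    ∑' a : {a // p a}, f a = ∑ a ∈ s, f a :=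
  ((Equiv.subtypeEquivRight h).tsum_eq (fun a : {a // a ∈ s} => f a)).trans (s.tsum_subtype f)

lemma sum_level_succ_sum_downCovers {M : Type*} [AddCommMonoid M] (hLF : LevelsFinite P) (n : ℕ)
    (f : Finset P → Finset P → M) :
    ∑ ν ∈ level hLF (n + 1), ∑ l ∈ downCovers ν, f l ν
      = ∑ l ∈ level hLF n, ∑ ν ∈ upCovers hLF l, f l ν := by
  refine sum_comm' fun ν l => ?_
  simp only [mem_level, mem_downCovers, mem_upCovers]
  constructor
  · rintro ⟨⟨-, hν⟩, h⟩
    exact ⟨h, h.1, by have := h.2.2.2; omega⟩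
  · rintro ⟨h, -, hl⟩
    exact ⟨⟨h.2.1, by have := h.2.2.2; omega⟩, h⟩

/-- The quadrangle `λ ↗ ν ↘ ρ` is also `λ ↘ λ ∩ ρ ↗ ρ`, with `ν = λ ∪ ρ`. -/
lemma sum_upCovers_sum_downCovers_erase {M : Type*} [AddCommMonoid M]
    {F G : Finset P → Finset P → M}
    (hFG : ∀ σ ρ ν, CoversF σ l → CoversF σ ρ → CoversF l ν → CoversF ρ ν →
      ρ ≠ l → F ν ρ = G σ ρ) :
    ∑ ν ∈ upCovers hLF l, ∑ ρ ∈ (downCovers ν).erase l, F ν ρ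
      = ∑ σ ∈ downCovers l, ∑ ρ ∈ (upCovers hLF σ).erase l, G σ ρ := by
  rw [sum_sigma', sum_sigma']
  refine sum_bij' (fun p _ => ⟨l ∩ p.2, p.2⟩) (fun p _ => ⟨l ∪ p.2, p.2⟩) ?_ ?_ ?_ ?_ ?_
  all_goals
    rintro ⟨ν, ρ⟩ hp
    simp only [mem_sigma, mem_erase, mem_upCovers, mem_downCovers] at hp
  · obtain ⟨hlν, hne, hρν⟩ := hp
    obtain ⟨hσl, hσρ, -⟩ := coversF_inter_of_coversF hlν hρν (Ne.symm hne)
    simp only [mem_sigma, mem_erase, mem_upCovers, mem_downCovers]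
    exact ⟨hσl, hne, hσρ⟩
  · obtain ⟨hσl, hne, hσρ⟩ := hp
    obtain ⟨hlν, hρν, -⟩ := coversF_union_of_coversF hσl hσρ (Ne.symm hne)
    simp only [mem_sigma, mem_erase, mem_upCovers, mem_downCovers]
    exact ⟨hlν, hne, hρν⟩
  · obtain ⟨hlν, hne, hρν⟩ := hp
    simp only [(coversF_inter_of_coversF hlν hρν (Ne.symm hne)).2.2]
  · obtain ⟨hσl, hne, hσρ⟩ := hp
    simp only [(coversF_union_of_coversF hσl hσρ (Ne.symm hne)).2.2]
  · obtain ⟨hlν, hne, hρν⟩ := hp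
    obtain ⟨hσl, hσρ, -⟩ := coversF_inter_of_coversF hlν hρν (Ne.symm hne)
    exact hFG _ _ _ hσl hσρ hlν hρν hne

end Neighbours

section Dimension

variable {κ : Finset P → Finset P → ℝ} {μ l : Finset P}

lemma dimRel_nonneg (hκ : EdgePositive κ) :
    ∀ (n : ℕ) (μ l : Finset P), 0 ≤ dimRel κ n μ l
  | 0, μ, l => by rw [dimRel]; split_ifs <;> norm_num
  | n + 1, μ, l => by
    rw [dimRel]
    refine sum_nonneg fun x _ => ?_
    split_ifs with h
    · exact mul_nonneg (hκ _ _ h.1).le (dimRel_nonneg hκ n μ _)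
    · exact le_rfl

lemma dimRel_eq_zero_of_not_subset : ∀ (n : ℕ), ¬ μ ⊆ l → dimRel κ n μ l = 0
  | 0, h => if_neg (by rintro rfl; exact h subset_rfl)
  | n + 1, h => sum_eq_zero fun x _ => if_neg fun hx => h (hx.2.trans (erase_subset x l))

lemma dimI_of_card_eq (h : l.card = μ.card) : dimI κ μ l = if μ = l then 1 else 0 := by
  simp [dimI, h, dimRel]

lemma dimT_empty : dimT κ (∅ : Finset P) = 1 := by
  simp [dimT, dimI, dimRel]

lemma dimI_eq_sum_downCovers (h : μ.card < l.card) :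
    dimI κ μ l = ∑ ρ ∈ downCovers l, κ ρ l * dimI κ μ ρ := by
  obtain ⟨n, hn⟩ : ∃ n, l.card - μ.card = n + 1 :=
    ⟨_, (Nat.succ_pred_eq_of_pos (by omega)).symm⟩
  rw [sum_downCovers, dimI, hn, dimRel]
  refine sum_congr rfl fun x hx => ?_
  by_cases hc : CoversF (l.erase x) l
  · have hcard : (l.erase x).card - μ.card = n := by rw [card_erase_of_mem hx]; omega
    by_cases hs : μ ⊆ l.erase x
    · simp [hc, hs, dimI, hcard]
    · simp [hc, hs, dimI, dimRel_eq_zero_of_not_subset]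
  · simp [hc]

lemma dimT_eq_sum_downCovers (h : l.Nonempty) :
    dimT κ l = ∑ ρ ∈ downCovers l, κ ρ l * dimT κ ρ :=
  dimI_eq_sum_downCovers (by simpa using h.card_pos)

lemma dimT_pos (hκ : EdgePositive κ) (hl : IsIdealF l) : 0 < dimT κ l := by
  induction l using Finset.strongInduction with
  | H l ih =>
    rcases l.eq_empty_or_nonempty with rfl | hne
    · simp [dimT_empty]
    obtain ⟨ρ, hρ⟩ := exists_coversF_of_nonempty hl hne
    rw [dimT_eq_sum_downCovers hne]
    refine sum_pos (fun ρ' h => ?_) ⟨ρ, mem_downCovers.2 hρ⟩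
    have h := mem_downCovers.1 h
    exact mul_pos (hκ _ _ h) (ih _ h.ssubset h.1)

end Dimension

section Kerov

variable {κ : Finset P → Finset P → ℝ} {q2 : P → ℝ} {t : ℝ} {μ l : Finset P}

lemma KerovCond.sum_upCovers_sub_sum_downCovers (hK : KerovCond κ (fun x => (q2 x : ℂ)) t)
    (hLF : LevelsFinite P) (hl : IsIdealF l) :
    ∑ ν ∈ upCovers hLF l, κ l ν ^ 2 * bx q2 l ν
      - ∑ ρ ∈ downCovers l, κ ρ l ^ 2 * bx q2 ρ l
      = 2 * l.card + t := by
  have h := hK l hl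
  rw [tsum_subtype_eq_sum (fun _ => (mem_upCovers (hLF := hLF)).symm)
      (fun ν => (κ l ν : ℂ) ^ 2 * bx (fun x => (q2 x : ℂ)) l ν),
    tsum_subtype_eq_sum (fun _ => mem_downCovers.symm)
      (fun ρ => (κ ρ l : ℂ) ^ 2 * bx (fun x => (q2 x : ℂ)) ρ l)] at h
  simp only [bx] at h ⊢
  exact_mod_cast h

theorem sum_upCovers_mul_dimT (hUD : UDSelfDual κ) (hK : KerovCond κ (fun x => (q2 x : ℂ)) t)
    (hLF : LevelsFinite P) (hl : IsIdealF l) :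
    ∑ ν ∈ upCovers hLF l, κ l ν * bx q2 l ν * dimT κ ν
      = (l.card + 1) * (l.card + t) * dimT κ l := by
  induction l using Finset.strongInduction with
  | H l ih =>
    have hKer := hK.sum_upCovers_sub_sum_downCovers hLF hl
    set U := ∑ ν ∈ upCovers hLF l, κ l ν ^ 2 * bx q2 l ν with hU_def
    set D := ∑ σ ∈ downCovers l, κ σ l ^ 2 * bx q2 σ l with hD_def
    clear_value U D
    have hdim : ∀ ν ∈ upCovers hLF l,
        dimT κ ν
          = κ l ν * dimT κ l + ∑ ρ ∈ (downCovers ν).erase l, κ ρ ν * dimT κ ρ := by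
      intro ν hν
      have hc := mem_upCovers.1 hν
      rw [dimT_eq_sum_downCovers (card_pos.1 (by rw [hc.2.2.2]; omega)),
        ← add_sum_erase _ (fun ρ => κ ρ ν * dimT κ ρ) (mem_downCovers.2 hc)]
    have hσ : ∀ σ ∈ downCovers l, ∑ ρ ∈ (upCovers hLF σ).erase l,
        κ σ l * (κ σ ρ * bx q2 σ ρ * dimT κ ρ)
          = κ σ l * (l.card * (l.card - 1 + t) * dimT κ σ
              - κ σ l * bx q2 σ l * dimT κ l) := by
      intro σ hσ
      have hc := mem_downCovers.1 hσ
      have hcard : (l.card : ℝ) = σ.card + 1 := by exact_mod_cast hc.2.2.2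
      rw [← mul_sum, sum_erase_eq_sub (mem_upCovers.2 hc), ih σ hc.ssubset hc.1, hcard]
      ring
    have hcard_mul :
        (l.card : ℝ) * ∑ σ ∈ downCovers l, κ σ l * dimT κ σ = l.card * dimT κ l := by
      rcases l.eq_empty_or_nonempty with rfl | hne
      · simp
      · rw [← dimT_eq_sum_downCovers hne]
    calc ∑ ν ∈ upCovers hLF l, κ l ν * bx q2 l ν * dimT κ ν
        = U * dimT κ l + ∑ ν ∈ upCovers hLF l, ∑ ρ ∈ (downCovers ν).erase l,
            κ l ν * bx q2 l ν * (κ ρ ν * dimT κ ρ) := by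
          rw [hU_def, sum_mul, ← sum_add_distrib]
          refine sum_congr rfl fun ν hν => ?_
          rw [hdim ν hν, ← mul_sum]
          ring
      _ = U * dimT κ l + ∑ σ ∈ downCovers l, ∑ ρ ∈ (upCovers hLF σ).erase l,
            κ σ l * (κ σ ρ * bx q2 σ ρ * dimT κ ρ) := by
          congr 1
          refine sum_upCovers_sum_downCovers_erase fun σ ρ ν hσl hσρ hlν hρν hne => ?_
          have hud := hUD σ ρ l ν hσρ hρν hσl hlν hne
          have hbx : bx q2 l ν = bx q2 σ ρ := by
            rw [bx, bx, ← (coversF_inter_of_coversF hlν hρν hne.symm).2.2,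
              ← (coversF_union_of_coversF hσl hσρ hne.symm).2.2, union_sdiff_left, inter_comm,
              sdiff_inter_self_left]
          rw [hbx]
          linear_combination (-(bx q2 σ ρ * dimT κ ρ)) * hud
      _ = U * dimT κ l
            + (l.card * (l.card - 1 + t)) * ∑ σ ∈ downCovers l, κ σ l * dimT κ σ
            - D * dimT κ l := by
          rw [sum_congr rfl hσ, mul_sum, hD_def, sum_mul, add_sub_assoc, ← sum_sub_distrib]
          congr 1
          refine sum_congr rfl fun σ _ => ?_
          ring
      _ = (l.card + 1) * (l.card + t) * dimT κ l := by
          linear_combination dimT κ l * hKer + (l.card - 1 + t) * hcard_mul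

lemma sum_level_succ_dimI_mul_dimT (hUD : UDSelfDual κ)
    (hK : KerovCond κ (fun x => (q2 x : ℂ)) t)
    (hLF : LevelsFinite P) {n : ℕ} (hn : μ.card ≤ n) :
    ∑ ν ∈ level hLF (n + 1), dimI κ μ ν * dimT κ ν * ∏ x ∈ ν, q2 x
      = (n + 1) * (n + t)
          * ∑ l ∈ level hLF n, dimI κ μ l * dimT κ l * ∏ x ∈ l, q2 x := by
  calc ∑ ν ∈ level hLF (n + 1), dimI κ μ ν * dimT κ ν * ∏ x ∈ ν, q2 x
      = ∑ ν ∈ level hLF (n + 1), ∑ l ∈ downCovers ν,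
          κ l ν * dimI κ μ l * (dimT κ ν * ∏ x ∈ ν, q2 x) := by
        refine sum_congr rfl fun ν hν => ?_
        rw [dimI_eq_sum_downCovers (by rw [(mem_level.1 hν).2]; omega), sum_mul, sum_mul]
        refine sum_congr rfl fun _ _ => by ring
    _ = ∑ l ∈ level hLF n, ∑ ν ∈ upCovers hLF l,
          κ l ν * dimI κ μ l * (dimT κ ν * ∏ x ∈ ν, q2 x) :=
        sum_level_succ_sum_downCovers hLF n _
    _ = ∑ l ∈ level hLF n, dimI κ μ l * (∏ x ∈ l, q2 x) *
          ∑ ν ∈ upCovers hLF l, κ l ν * bx q2 l ν * dimT κ ν := by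
        refine sum_congr rfl fun l _ => ?_
        rw [mul_sum]
        refine sum_congr rfl fun ν hν => ?_
        rw [(mem_upCovers.1 hν).prod_eq_bx_mul]
        ring
    _ = (n + 1) * (n + t)
          * ∑ l ∈ level hLF n, dimI κ μ l * dimT κ l * ∏ x ∈ l, q2 x := by
        rw [mul_sum]
        refine sum_congr rfl fun l hl => ?_
        obtain ⟨hlI, rfl⟩ := mem_level.1 hl
        rw [sum_upCovers_mul_dimT hUD hK hLF hlI]
        ring

theorem sum_level_add_dimI_mul_dimT (hUD : UDSelfDual κ)
    (hK : KerovCond κ (fun x => (q2 x : ℂ)) t) (hLF : LevelsFinite P) (hμ : IsIdealF μ)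
    (m : ℕ) :
    ∑ l ∈ level hLF (μ.card + m), dimI κ μ l * dimT κ l * ∏ x ∈ l, q2 x
      = dimT κ μ * (∏ x ∈ μ, q2 x) * (μ.card + 1).ascFactorial m
          * (ascPochhammer ℝ m).eval (μ.card + t) := by
  induction m with
  | zero =>
    rw [add_zero, sum_congr rfl fun l hl => by rw [dimI_of_card_eq (mem_level.1 hl).2]]
    simp [ite_mul, mem_level.2 ⟨hμ, rfl⟩]
  | succ m ih =>
    rw [← add_assoc, sum_level_succ_dimI_mul_dimT hUD hK hLF (Nat.le_add_right _ _), ih,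
      Nat.ascFactorial_succ, ascPochhammer_succ_right, Polynomial.eval_mul]
    simp only [Polynomial.eval_add, Polynomial.eval_X, Polynomial.eval_natCast]
    push_cast
    ring

end Kerov

theorem hasSum_ascPochhammer_eval_div_factorial_mul_pow (a : ℝ) {x : ℝ} (hx : |x| < 1) :
    HasSum (fun n => (ascPochhammer ℝ n).eval a / n ! * x ^ n) (1 / (1 - x) ^ a) := by
  have h := (Real.one_div_one_sub_rpow_hasFPowerSeriesOnBall_zero a).hasSum
    (y := x) (by simpa [enorm_eq_nnnorm, ← NNReal.coe_lt_one] using hx)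
  simp only [FormalMultilinearSeries.ofScalars_apply_eq, zero_add, smul_eq_mul] at h
  refine h.congr_fun fun n => ?_
  rw [Ring.choose_eq_smul, Polynomial.descPochhammer_smeval_eq_ascPochhammer,
    Polynomial.ascPochhammer_smeval_eq_eval, smul_eq_mul, inv_mul_eq_div]
  ring_nf

section Summation

variable {hLF : LevelsFinite P}

noncomputable def levelEquiv (hLF : LevelsFinite P) : G P ≃ Σ n, {l // l ∈ level hLF n} where
  toFun l := ⟨l.1.card, l.1, mem_level.2 ⟨l.2, rfl⟩⟩
  invFun p := ⟨p.2.1, (mem_level.1 p.2.2).1⟩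
  left_inv _ := rfl
  right_inv := by
    rintro ⟨n, l, hl⟩
    obtain ⟨-, rfl⟩ := mem_level.1 hl
    rfl

theorem hasSum_of_hasSum_sum_level {f : Finset P → ℝ} {s : ℝ}
    (hf : ∀ l, IsIdealF l → 0 ≤ f l)
    (h : HasSum (fun n => ∑ l ∈ level hLF n, f l) s) : HasSum (fun l : G P => f l.1) s := by
  let F : (Σ n, {l // l ∈ level hLF n}) → ℝ := fun p => f p.2.1
  have hfiber : ∀ n, HasSum (fun c => F ⟨n, c⟩) (∑ l ∈ level hLF n, f l) :=
    fun n => (level hLF n).hasSum f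
  have hF : Summable F := (summable_sigma_of_nonneg fun p => hf _ (mem_level.1 p.2.2).1).2
    ⟨fun n => (hfiber n).summable, h.summable.congr fun n => (hfiber n).tsum_eq.symm⟩
  rw [h.unique (hF.hasSum.sigma hfiber)]
  exact (levelEquiv hLF).hasSum_iff.2 hF.hasSum

end Summation

section Moments

variable {κ : Finset P → Finset P → ℝ} {q : P → ℝ} {t ξ : ℝ} {μ l : Finset P}

lemma Pstar_mul_Mxi (hκ : EdgePositive κ) (hl : IsIdealF l) :
    Pstar κ μ l * Mxi κ q t ξ l = (1 - ξ) ^ t * ξ ^ l.card * l.card.descFactorial μ.card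
      / (l.card ! : ℝ) ^ 2 * (dimI κ μ l * dimT κ l * ∏ x ∈ l, q x ^ 2) := by
  have := (dimT_pos hκ hl).ne'
  unfold Pstar Mxi
  field_simp

lemma Pstar_mul_Mxi_nonneg (hκ : EdgePositive κ) (hξ0 : 0 ≤ ξ) (hξ1 : ξ ≤ 1)
    (hl : IsIdealF l) :
    0 ≤ Pstar κ μ l * Mxi κ q t ξ l := by
  have h1ξ : 0 ≤ (1 - ξ) ^ t := Real.rpow_nonneg (sub_nonneg.2 hξ1) t
  have hdimI : 0 ≤ dimI κ μ l := dimRel_nonneg hκ _ _ _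
  have hdimT := dimT_pos hκ hl
  rw [Pstar_mul_Mxi hκ hl]
  positivity

lemma sum_level_Pstar_mul_Mxi_of_lt (hLF : LevelsFinite P) {n : ℕ} (hn : n < μ.card) :
    ∑ l ∈ level hLF n, Pstar κ μ l * Mxi κ q t ξ l = 0 :=
  sum_eq_zero fun l hl => by
    rw [Pstar, (mem_level.1 hl).2, Nat.descFactorial_eq_zero_iff_lt.2 hn]
    simp

theorem sum_level_add_Pstar_mul_Mxi (hκ : EdgePositive κ) (hUD : UDSelfDual κ)
    (hK : KerovCond κ (fun x => (q x : ℂ) ^ 2) t) (hLF : LevelsFinite P) (hμ : IsIdealF μ)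
    (m : ℕ) :
    ∑ l ∈ level hLF (μ.card + m), Pstar κ μ l * Mxi κ q t ξ l
      = (1 - ξ) ^ t * ξ ^ μ.card * dimT κ μ * (∏ x ∈ μ, q x ^ 2) / μ.card !
        * ((ascPochhammer ℝ m).eval (μ.card + t) / m ! * ξ ^ m) := by
  have hK' : KerovCond κ (fun x => ((q x ^ 2 : ℝ) : ℂ)) t := by simpa only [Complex.ofReal_pow]
  rw [sum_congr rfl fun l hl => by rw [Pstar_mul_Mxi hκ (mem_level.1 hl).1, (mem_level.1 hl).2],
    ← mul_sum, sum_level_add_dimI_mul_dimT hUD hK' hLF hμ m]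
  have hdesc : ((μ.card + m).descFactorial μ.card : ℝ) = (μ.card + m)! / m ! := by
    rw [eq_div_iff (by positivity), mul_comm]
    have h := Nat.factorial_mul_descFactorial (Nat.le_add_right μ.card m)
    rw [Nat.add_sub_cancel_left] at h
    exact_mod_cast h
  have hasc : ((μ.card + 1).ascFactorial m : ℝ) = (μ.card + m)! / μ.card ! := by
    rw [eq_div_iff (by positivity), mul_comm]
    exact_mod_cast Nat.factorial_mul_ascFactorial μ.card m
  rw [hdesc, hasc, pow_add]
  field_simp

end Moments

theorem statement14_general {P : Type*} [PartialOrder P]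
    (κ : Finset P → Finset P → ℝ) (q : P → ℝ) (t ξ : ℝ)
    (hκ : EdgePositive κ)
    (hξ0 : 0 < ξ) (hξ1 : ξ < 1)
    (hLF : LevelsFinite P) (hUD : UDSelfDual κ)
    (hK : KerovCond κ (fun x => ((q x : ℂ)) ^ 2) (t : ℂ)) :
    ∀ μ : Finset P, IsIdealF μ →
      Summable (fun l : G P => Pstar κ μ l.1 * Mxi κ q t ξ l.1) ∧
      ∑' l : G P, Pstar κ μ l.1 * Mxi κ q t ξ l.1
        = (ξ / (1 - ξ)) ^ μ.card * (∏ x ∈ μ, q x ^ 2) * dimT κ μ /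
            (Nat.factorial μ.card : ℝ) := by
  intro μ hμ
  set C := (1 - ξ) ^ t * ξ ^ μ.card * dimT κ μ * (∏ x ∈ μ, q x ^ 2) / (μ.card ! : ℝ)
    with hC
  have hlevels : HasSum (fun n => ∑ l ∈ level hLF n, Pstar κ μ l * Mxi κ q t ξ l)
      (C * (1 / (1 - ξ) ^ (μ.card + t))) := by
    rw [← hasSum_nat_add_iff' μ.card, sum_eq_zero fun n hn =>
      sum_level_Pstar_mul_Mxi_of_lt hLF (mem_range.1 hn), sub_zero]
    refine ((hasSum_ascPochhammer_eval_div_factorial_mul_pow (μ.card + t)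
      (abs_lt.2 ⟨by linarith, hξ1⟩)).mul_left C).congr_fun fun m => ?_
    rw [add_comm, sum_level_add_Pstar_mul_Mxi hκ hUD hK hLF hμ]
  have hsum := hasSum_of_hasSum_sum_level
    (fun l hl => Pstar_mul_Mxi_nonneg hκ hξ0.le hξ1.le hl) hlevels
  refine ⟨hsum.summable, hsum.tsum_eq.trans ?_⟩
  have h1ξ : 0 < 1 - ξ := by linarith
  rw [hC, Real.rpow_add h1ξ, Real.rpow_natCast, div_pow]
  field_simp

/-- the moment functional: `Σ_λ P*_μ(λ) M_ξ(λ)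
  = (ξ/(1−ξ))^{|μ|} (∏_{□∈μ} 𝗊(□)²) dim μ / |μ|!`. -/
theorem statement14 {P : Type*} [PartialOrder P]
    (κ : Finset P → Finset P → ℝ) (q : P → ℝ) (t ξ : ℝ)
    (hκ : EdgePositive κ) (hq : ∀ x : P, 0 < q x) (ht : 0 < t)
    (hξ0 : 0 < ξ) (hξ1 : ξ < 1)
    (hLF : LevelsFinite P) (hUD : UDSelfDual κ)
    (hK : KerovCond κ (fun x => ((q x : ℂ)) ^ 2) (t : ℂ)) :
    ∀ μ : Finset P, IsIdealF μ →
      Summable (fun l : G P => Pstar κ μ l.1 * Mxi κ q t ξ l.1) ∧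
      ∑' l : G P, Pstar κ μ l.1 * Mxi κ q t ξ l.1
        = (ξ / (1 - ξ)) ^ μ.card * (∏ x ∈ μ, q x ^ 2) * dimT κ μ /
            (Nat.factorial μ.card : ℝ) :=
  statement14_general κ q t ξ hκ hξ0 hξ1 hLF hUD hK

end IdealGraph
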